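/- arXiv:1906.01576 — 2 statements merged into one kernel-verified Lean document; each statement's English description precedes it below -/
import Mathlib

section
/- Let m ≥ 1 and let S ⊂ ℝ^m be a compact convex set with non-empty interior. Then there exists an invertible affine map T : ℝ^m → ℝ^m such that B(0, 1/m) ⊆ T(S) ⊆ B(0, 1), where B(0,r) is the open ball of radius r (with the closed ball inclusion for the inner ball allowed). -/
/-!
Among the affine images `A '' closedBall 0 1 + c` of the unit ball that lie in `S`, compactness
gives one maximizing `|det A|`, i.e. of maximal volume; it is nondegenerate because `S` has
interior, so after an affine change of variables it is the unit ball itself. If the normalized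
body contained a point `p` with `‖p‖ > d = dim E`, it would contain the convex hull of the ball and
`p`, hence the ellipsoid obtained by stretching the ball by `1 + ε (‖p‖ - 1)` towards `p` and
shrinking it by `√(1 - 2ε)` orthogonally to `p`. Its volume ratio
`(1 + ε (‖p‖ - 1)) (1 - 2ε) ^ ((d - 1) / 2) = 1 + ε (‖p‖ - d) + O(ε²)` exceeds `1` for small `ε`,
contradicting maximality. Scaling by `1 / d` then gives the theorem.
-/

open Metric Set Module
open scoped RealInnerProductSpace Pointwise

theorem Matrix.det_smul_one_add_smul_vecMulVec_self {ι : Type*} [Fintype ι] [DecidableEq ι]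
    {n : ℕ} (hι : Fintype.card ι = n + 1) {v : ι → ℝ} (hv : v ⬝ᵥ v = 1) (a : ℝ) {b : ℝ}
    (hb : b ≠ 0) : (b • (1 : Matrix ι ι ℝ) + (a - b) • vecMulVec v v).det = a * b ^ n := by
  have : b • (1 : Matrix ι ι ℝ) + (a - b) • vecMulVec v v
      = b • (1 + replicateCol Unit ((b⁻¹ * (a - b)) • v) * replicateRow Unit v) := by
    rw [replicateCol_smul, Matrix.smul_mul, ← vecMulVec_eq Unit, smul_add, smul_smul,
      mul_inv_cancel_left₀ hb]
  rw [this, det_smul, det_one_add_replicateCol_mul_replicateRow, dotProduct_smul, hv, hι,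
    smul_eq_mul, mul_one, pow_succ, mul_assoc, mul_add, mul_one, mul_inv_cancel_left₀ hb]
  ring

lemma exists_one_lt_mul_sqrt_pow (n : ℕ) {s : ℝ} (hs : n + 1 < s) :
    ∃ ε : ℝ, 0 < ε ∧ ε ≤ 1 / 4 ∧ 1 < (1 + ε * (s - 1)) * √(1 - 2 * ε) ^ n := by
  set σ := s - 1
  have hσn : (n : ℝ) < σ := by linarith
  have hσ : 0 < σ := (Nat.cast_nonneg n).trans_lt hσn
  -- by Bernoulli, the squared product is at least `(1 + 2εσ) (1 - 2nε)`, which is `> 1` as soon as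
  -- `2nσε < σ - n`
  set ε := min (1 / 4) ((σ - n) / (4 * n * σ + 1))
  have hε : 0 < ε := lt_min (by norm_num) (div_pos (by linarith) (by positivity))
  have hε4 : ε ≤ 1 / 4 := min_le_left _ _
  have hsmall : ε * (4 * n * σ + 1) ≤ σ - n :=
    (le_div_iff₀ (by positivity)).1 (min_le_right _ _)
  have hbern : 1 - 2 * n * ε ≤ (1 - 2 * ε) ^ n := by
    have := one_add_mul_le_pow (a := -(2 * ε)) (by linarith) n
    rw [← sub_eq_add_neg] at this
    linarith
  have hsq : 1 < ((1 + ε * σ) * √(1 - 2 * ε) ^ n) ^ 2 := by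
    rw [mul_pow, ← pow_mul, mul_comm n, pow_mul, Real.sq_sqrt (by linarith)]
    have hsq_ge : 1 + 2 * ε * σ ≤ (1 + ε * σ) ^ 2 := by nlinarith [sq_nonneg (ε * σ)]
    have hpow : 0 ≤ (1 - 2 * ε) ^ n := pow_nonneg (by linarith) n
    calc 1 < (1 + 2 * ε * σ) * (1 - 2 * n * ε) := by nlinarith
      _ ≤ (1 + 2 * ε * σ) * (1 - 2 * ε) ^ n := by gcongr
      _ ≤ (1 + ε * σ) ^ 2 * (1 - 2 * ε) ^ n := by gcongr
  exact ⟨ε, hε, hε4, (one_lt_sq_iff₀ (by positivity)).1 hsq⟩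

section InnerProductSpace

variable {E : Type*} [NormedAddCommGroup E] [InnerProductSpace ℝ E]

noncomputable def scaleAlong (u : E) (a b : ℝ) : E →L[ℝ] E :=
  b • ContinuousLinearMap.id ℝ E + (a - b) • (innerSL ℝ u).smulRight u

lemma scaleAlong_apply (u : E) (a b : ℝ) (x : E) :
    scaleAlong u a b x = b • x + ((a - b) * ⟪u, x⟫) • u := by
  simp [scaleAlong, mul_smul]

lemma det_scaleAlong [FiniteDimensional ℝ E] {n : ℕ} (hn : finrank ℝ E = n + 1) {u : E}
    (hu : ‖u‖ = 1) (a : ℝ) {b : ℝ} (hb : b ≠ 0) : (scaleAlong u a b).det = a * b ^ n := by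
  let e := stdOrthonormalBasis ℝ E
  have hv : (fun i => ⟪e i, u⟫) ⬝ᵥ (fun i => ⟪e i, u⟫) = 1 := by
    simpa [dotProduct, real_inner_comm u, ← sq, hu] using e.sum_inner_mul_inner u u
  rw [ContinuousLinearMap.det, ← LinearMap.det_toMatrix e.toBasis,
    ← Matrix.det_smul_one_add_smul_vecMulVec_self (by simp [hn]) hv a hb]
  congr 1
  ext i j
  simp only [LinearMap.toMatrix_apply, OrthonormalBasis.coe_toBasis, ContinuousLinearMap.coe_coe,
    scaleAlong_apply, map_add, map_smul, Finsupp.coe_add, Finsupp.coe_smul, Pi.add_apply,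
    Pi.smul_apply, OrthonormalBasis.coe_toBasis_repr_apply, OrthonormalBasis.repr_self,
    PiLp.single_apply, smul_eq_mul, mul_ite, mul_one, mul_zero, OrthonormalBasis.repr_apply_apply,
    real_inner_comm u, Matrix.add_apply, Matrix.smul_apply, Matrix.one_apply,
    Matrix.vecMulVec_apply, add_right_inj]
  ring

lemma Convex.scaleAlong_add_smul_mem {K : Set E} (hK : Convex ℝ K) (hball : closedBall 0 1 ⊆ K)
    {u : E} (hu : ‖u‖ = 1) {s ε : ℝ} (hp : s • u ∈ K) (hε : 0 ≤ ε) (hε4 : ε ≤ 1 / 4) {x : E}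
    (hx : x ∈ closedBall 0 1) :
    scaleAlong u (1 + ε * (s - 1)) √(1 - 2 * ε) x + (ε * (s - 1)) • u ∈ K := by
  rw [mem_closedBall_zero_iff] at hx
  obtain ⟨ht₁, ht₂⟩ := abs_le.1 <| (abs_real_inner_le_norm u x).trans (by simpa [hu] using hx)
  have hβ : √(1 - 2 * ε) ^ 2 = 1 - 2 * ε := Real.sq_sqrt (by linarith)
  -- the point is `l • (s • u) + (1 - l) • z` with `l = ε (1 + ⟪u, x⟫)` and `z` in the unit ball
  set t := ⟪u, x⟫ with ht
  have hwu : ⟪x - t • u, u⟫ = 0 := by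
    rw [inner_sub_left, real_inner_smul_left, real_inner_self_eq_norm_sq, hu, real_inner_comm, ← ht]
    ring
  have hw : ‖x - t • u‖ ^ 2 = ‖x‖ ^ 2 - t ^ 2 := by
    rw [norm_sub_sq_real, real_inner_smul_right, norm_smul, hu, Real.norm_eq_abs, mul_one, sq_abs,
      real_inner_comm, ← ht]
    ring
  set y := √(1 - 2 * ε) • (x - t • u) + ((1 - ε) * t - ε) • u
  have hy : ‖y‖ ≤ 1 - ε * (1 + t) := by
    have hy2 : ‖y‖ ^ 2 = (1 - 2 * ε) * ‖x - t • u‖ ^ 2 + ((1 - ε) * t - ε) ^ 2 := by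
      rw [sq, norm_add_sq_eq_norm_sq_add_norm_sq_real, norm_smul, norm_smul, hu]
      · rw [Real.norm_eq_abs, Real.norm_eq_abs]
        linear_combination ‖x - t • u‖ ^ 2 * abs_mul_abs_self √(1 - 2 * ε)
          + ‖x - t • u‖ ^ 2 * hβ + abs_mul_abs_self ((1 - ε) * t - ε)
      · simp [real_inner_smul_left, real_inner_smul_right, hwu]
    refine (sq_le_sq₀ (norm_nonneg y) (by nlinarith)).1 ?_
    have hx2 : ‖x‖ ^ 2 ≤ 1 := by nlinarith [norm_nonneg x]
    rw [hy2, hw]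
    nlinarith [mul_le_mul_of_nonneg_left hx2 (by linarith : (0 : ℝ) ≤ 1 - 2 * ε)]
  have hlam : ε * (1 + t) < 1 := by nlinarith
  have hz : (1 - ε * (1 + t))⁻¹ • y ∈ closedBall 0 1 := by
    rw [mem_closedBall_zero_iff, norm_smul, norm_inv, Real.norm_of_nonneg (by linarith)]
    exact inv_mul_le_one_of_le₀ hy (by linarith)
  convert hK hp (hball hz) (by nlinarith : 0 ≤ ε * (1 + t)) (by linarith) (add_sub_cancel _ _)
    using 1
  rw [smul_inv_smul₀ (by linarith), scaleAlong_apply]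
  simp only [y]
  module

/-- The pair `(A, c)` encodes the (possibly degenerate) ellipsoid `A '' closedBall 0 1 + c`, whose
volume is proportional to `|det A|`. -/
def inscribedEllipsoids (S : Set E) : Set ((E →L[ℝ] E) × E) :=
  {q | MapsTo (fun x => q.1 x + q.2) (closedBall 0 1) S}

lemma isClosed_inscribedEllipsoids {S : Set E} (hS : IsClosed S) :
    IsClosed (inscribedEllipsoids S) := by
  simp only [inscribedEllipsoids, MapsTo, ofPred_forall]
  exact isClosed_biInter fun x _ => hS.preimage (by fun_prop)

lemma isBounded_inscribedEllipsoids {S : Set E} (hS : Bornology.IsBounded S) :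
    Bornology.IsBounded (inscribedEllipsoids S) := by
  obtain ⟨R, hR⟩ := hS.subset_closedBall 0
  refine isBounded_iff_forall_norm_le.2 ⟨2 * R, fun ⟨A, c⟩ hq => ?_⟩
  have hR' : ∀ x ∈ closedBall (0 : E) 1, ‖A x + c‖ ≤ R := fun x hx =>
    mem_closedBall_zero_iff.1 (hR (hq hx))
  have hc : ‖c‖ ≤ R := by simpa using hR' 0 (by simp)
  have hA : ‖A‖ ≤ 2 * R := A.opNorm_le_of_unit_norm (by linarith [norm_nonneg c]) fun x hx =>
    calc ‖A x‖ = ‖(A x + c) - c‖ := by rw [add_sub_cancel_right]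
      _ ≤ ‖A x + c‖ + ‖c‖ := norm_sub_le _ _
      _ ≤ 2 * R := by linarith [hR' x (by simp [hx])]
  exact max_le hA (by linarith [norm_nonneg c])

lemma exists_mem_inscribedEllipsoids_det_ne_zero [FiniteDimensional ℝ E] {S : Set E}
    (hS : (interior S).Nonempty) : ∃ q ∈ inscribedEllipsoids S, q.1.det ≠ 0 := by
  obtain ⟨x₀, hx₀⟩ := hS
  obtain ⟨δ, hδ, hball⟩ := Metric.mem_nhds_iff.1 (mem_interior_iff_mem_nhds.1 hx₀)
  refine ⟨((δ / 2) • ContinuousLinearMap.id ℝ E, x₀), fun x hx => hball ?_, ?_⟩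
  · rw [mem_closedBall_zero_iff] at hx
    rw [mem_ball, dist_eq_norm]
    simp only [smul_apply, ContinuousLinearMap.id_apply, add_sub_cancel_right, norm_smul, norm_div,
      Real.norm_eq_abs, abs_of_pos hδ]
    nlinarith
  · simp [ContinuousLinearMap.det, LinearMap.det_smul, hδ.ne']

lemma Convex.exists_mem_inscribedEllipsoids_one_lt_det [FiniteDimensional ℝ E] {K : Set E}
    (hK : Convex ℝ K) (hball : closedBall 0 1 ⊆ K) {p : E} (hp : p ∈ K)
    (hlt : finrank ℝ E < ‖p‖) : ∃ q ∈ inscribedEllipsoids K, 1 < q.1.det := by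
  have hp0 : p ≠ 0 := norm_pos_iff.1 ((Nat.cast_nonneg _).trans_lt hlt)
  have : Nontrivial E := nontrivial_of_ne p 0 hp0
  obtain ⟨n, hn⟩ := Nat.exists_eq_add_one_of_ne_zero (finrank_pos (R := ℝ) (M := E)).ne'
  rw [hn, Nat.cast_succ] at hlt
  obtain ⟨ε, hε, hε4, hgain⟩ := exists_one_lt_mul_sqrt_pow n hlt
  have hu : ‖‖p‖⁻¹ • p‖ = 1 := norm_smul_inv_norm hp0
  have hsu : ‖p‖ • ‖p‖⁻¹ • p ∈ K := by rwa [smul_inv_smul₀ (norm_ne_zero_iff.2 hp0)]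
  refine ⟨(scaleAlong (‖p‖⁻¹ • p) (1 + ε * (‖p‖ - 1)) √(1 - 2 * ε), (ε * (‖p‖ - 1)) • ‖p‖⁻¹ • p),
    fun x hx => hK.scaleAlong_add_smul_mem hball hu hsu hε.le hε4 hx, ?_⟩
  rwa [det_scaleAlong hn hu _ (Real.sqrt_pos.2 (by linarith)).ne']

lemma preimage_subset_closedBall_finrank_of_isMaxOn [FiniteDimensional ℝ E] {S : Set E}
    (hS : Convex ℝ S) {A : E →L[ℝ] E} {b : E} (hAb : (A, b) ∈ inscribedEllipsoids S)
    (hmax : IsMaxOn (fun q => |q.1.det|) (inscribedEllipsoids S) (A, b)) (hA : A.det ≠ 0) :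
    (fun y => A y + b) ⁻¹' S ⊆ closedBall 0 (finrank ℝ E) := by
  intro p hp
  by_contra hlt
  rw [mem_closedBall_zero_iff, not_le] at hlt
  have hK : Convex ℝ ((fun y => A y + b) ⁻¹' S) :=
    (hS.translate_preimage_left b).linear_preimage (A : E →ₗ[ℝ] E)
  obtain ⟨⟨N, c⟩, hNc, hN⟩ :=
    hK.exists_mem_inscribedEllipsoids_one_lt_det hAb.subset_preimage hp hlt
  have hANc : (A ∘L N, A c + b) ∈ inscribedEllipsoids S := fun x hx => by
    simpa [add_assoc] using hNc hx
  have hle : |A.det| * |N.det| ≤ |A.det| := by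
    simpa [ContinuousLinearMap.det, LinearMap.det_comp, abs_mul] using hmax hANc
  nlinarith [abs_pos.2 hA, le_abs_self N.det]

theorem exists_affineEquiv_closedBall_subset_image_subset_closedBall_finrank
    [FiniteDimensional ℝ E] {S : Set E} (hS : IsCompact S) (hconv : Convex ℝ S)
    (hint : (interior S).Nonempty) :
    ∃ T : E ≃ᵃ[ℝ] E, closedBall 0 1 ⊆ T '' S ∧ T '' S ⊆ closedBall 0 (finrank ℝ E) := by
  obtain ⟨q₀, hq₀, hdet₀⟩ := exists_mem_inscribedEllipsoids_det_ne_zero hint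
  have hcpt : IsCompact (inscribedEllipsoids S) := isCompact_of_isClosed_isBounded
    (isClosed_inscribedEllipsoids hS.isClosed) (isBounded_inscribedEllipsoids hS.isBounded)
  obtain ⟨⟨A, b⟩, hAb, hmax⟩ := hcpt.exists_isMaxOn ⟨q₀, hq₀⟩
    (ContinuousLinearMap.continuous_det.comp continuous_fst).abs.continuousOn
  have hA : A.det ≠ 0 := abs_pos.1 ((abs_pos.2 hdet₀).trans_le (hmax hq₀))
  let F : E ≃ᵃ[ℝ] E :=
    ((A : E →ₗ[ℝ] E).equivOfDetNeZero hA).toAffineEquiv.trans (AffineEquiv.constVAdd ℝ E b)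
  have hF : ⇑F = fun y => A y + b := funext fun y => add_comm _ _
  refine ⟨F.symm, ?_, ?_⟩ <;> rw [F.image_symm, hF]
  · exact hAb.subset_preimage
  · exact preimage_subset_closedBall_finrank_of_isMaxOn hconv hAb hmax hA

end InnerProductSpace

/-- Normalization of a convex body via John's theorem: some invertible affine image of `S`
is squeezed between balls of radii `1/m` and `1`. -/
theorem stmt_14 (m : ℕ) (hm : 1 ≤ m) (S : Set (EuclideanSpace ℝ (Fin m)))
    (hS : IsCompact S) (hconv : Convex ℝ S) (hint : (interior S).Nonempty) :
    ∃ T : EuclideanSpace ℝ (Fin m) ≃ᵃ[ℝ] EuclideanSpace ℝ (Fin m),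
      Metric.ball 0 (1 / (m : ℝ)) ⊆ ⇑T '' S ∧ ⇑T '' S ⊆ Metric.closedBall 0 1 := by
  obtain ⟨T, hball, hsub⟩ :=
    exists_affineEquiv_closedBall_subset_image_subset_closedBall_finrank hS hconv hint
  rw [finrank_euclideanSpace_fin] at hsub
  have hm₀ : (0 : ℝ) < m := by exact_mod_cast hm
  let U := T.trans (LinearEquiv.smulOfNeZero ℝ _ _ (inv_ne_zero hm₀.ne')).toAffineEquiv
  have hU : ⇑U '' S = (m : ℝ)⁻¹ • (⇑T '' S) := by
    rw [← image_smul, ← image_comp]; rfl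
  refine ⟨U, ?_, ?_⟩ <;> rw [hU]
  · calc ball 0 (1 / (m : ℝ)) ⊆ closedBall (0 : EuclideanSpace ℝ (Fin m)) (1 / m) :=
          ball_subset_closedBall
      _ = (m : ℝ)⁻¹ • closedBall 0 1 := by
        rw [_root_.smul_closedBall _ _ zero_le_one, smul_zero, norm_inv, Real.norm_natCast,
          mul_one, one_div]
      _ ⊆ (m : ℝ)⁻¹ • (⇑T '' S) := smul_set_mono hball
  · calc (m : ℝ)⁻¹ • (⇑T '' S) ⊆ (m : ℝ)⁻¹ • closedBall 0 m := smul_set_mono hsub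
      _ = closedBall 0 1 := by
        rw [_root_.smul_closedBall _ _ hm₀.le, smul_zero, norm_inv, Real.norm_natCast,
          inv_mul_cancel₀ hm₀.ne']
end

section
/- Fix p > 1 and n ≥ 2 with p = (4n−2)/3, and set β = (n+1)/(4n−5) and λ = −β/2. Then the function ψ(θ) = −(β/2) tan(θ/2) satisfies, for all θ ∈ (0, π), the first-order ODE 0 = ((p−1)ψ(θ)² + λ²) ψ'(θ) + (λ² + ψ(θ)²) [ (p−1)ψ(θ)² + (n−2) cot(θ) ψ(θ) + λ²(p−1) + λ(n−p) ]. -/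
/-!
Along the ansatz `ψ = -(β/2) tan(θ/2)`, `λ = -β/2`, write `t = tan(θ/2)`: then
`ψ' = -(β/4)(1 + t²)` and `cot θ · ψ = -(β/4)(1 - t²)`, so the right-hand side of the ODE is
`β³(1 + t²)/16 · ((1 + t²)(β(p-1) - (p+1-n)) + (3p - 4n + 2))`.
Both brackets vanish exactly when `β = (p+1-n)/(p-1)` and `p = (4n-2)/3`, which is the case for
`β = (n+1)/(4n-5)`.
-/

open Real

/-- The right-hand side of equation (1.3), with `ψ(θ)`, `ψ'(θ)` and `cot θ` replaced by the
numbers `ψ`, `dψ` and `cot`. -/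
def angularODE (n p lam ψ dψ cot : ℝ) : ℝ :=
  ((p - 1) * ψ ^ 2 + lam ^ 2) * dψ +
    (lam ^ 2 + ψ ^ 2) * ((p - 1) * ψ ^ 2 + (n - 2) * cot * ψ + lam ^ 2 * (p - 1) + lam * (n - p))

theorem hasDerivAt_tan_half {θ : ℝ} (hθ : cos (θ / 2) ≠ 0) :
    HasDerivAt (fun x => tan (x / 2)) ((1 + tan (θ / 2) ^ 2) / 2) θ := by
  refine ((hasDerivAt_tan hθ).comp θ ((hasDerivAt_id θ).div_const 2)).congr_deriv ?_
  rw [tan_eq_sin_div_cos]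
  field_simp
  linear_combination -sin_sq_add_cos_sq (θ / 2)

theorem cos_div_sin_eq_tan_half {θ : ℝ} (hc : cos (θ / 2) ≠ 0) :
    cos θ / sin θ = (1 - tan (θ / 2) ^ 2) / (2 * tan (θ / 2)) := by
  conv_lhs => rw [← add_halves θ, ← two_mul, sin_two_mul, cos_two_mul']
  rw [tan_eq_sin_div_cos]
  field_simp

theorem angularODE_tan_half (n p β t : ℝ) (ht : t ≠ 0) :
    angularODE n p (-β / 2) (-(β / 2) * t) (-(β / 4) * (1 + t ^ 2)) ((1 - t ^ 2) / (2 * t)) =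
      β ^ 3 * (1 + t ^ 2) / 16 * ((1 + t ^ 2) * (β * (p - 1) - (p + 1 - n)) + (3 * p - 4 * n + 2)) := by
  unfold angularODE
  field_simp
  ring

theorem stmt_17_general (n : ℕ) (p : ℝ)
    (hpn : p = (4 * n - 2) / 3)
    (β lam : ℝ) (hβ : β = (n + 1) / (4 * n - 5)) (hlam : lam = -β / 2)
    (ψ : ℝ → ℝ) (hψ : ∀ θ : ℝ, ψ θ = -(β / 2) * Real.tan (θ / 2)) :
    ∀ θ ∈ Set.Ioo (0 : ℝ) Real.pi,
      0 = ((p - 1) * ψ θ ^ 2 + lam ^ 2) * deriv ψ θ +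
        (lam ^ 2 + ψ θ ^ 2) *
          ((p - 1) * ψ θ ^ 2 + ((n : ℝ) - 2) * (Real.cos θ / Real.sin θ) * ψ θ +
            lam ^ 2 * (p - 1) + lam * ((n : ℝ) - p)) := by
  rintro θ ⟨h0, hπ⟩
  have hc : 0 < cos (θ / 2) := cos_pos_of_mem_Ioo ⟨by linarith [pi_pos], by linarith⟩
  have ht : tan (θ / 2) ≠ 0 := (tan_pos_of_pos_of_lt_pi_div_two (by linarith) (by linarith)).ne'
  have hψ' : deriv ψ θ = -(β / 4) * (1 + tan (θ / 2) ^ 2) := by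
    rw [funext hψ, ((hasDerivAt_tan_half hc.ne').const_mul (-(β / 2))).deriv]
    ring
  have h4n : (4 * n - 5 : ℝ) ≠ 0 := by
    intro h
    have : ((4 * n : ℕ) : ℝ) = 5 := by push_cast; linarith
    norm_cast at this
    omega
  have hβp : β * (p - 1) = p + 1 - n := by
    rw [hβ, hpn, div_mul_eq_mul_div, div_eq_iff h4n]
    ring
  have h3p : 3 * p - 4 * n + 2 = 0 := by rw [hpn]; ring
  have h := angularODE_tan_half n p β (tan (θ / 2)) ht
  rw [← cos_div_sin_eq_tan_half hc.ne', ← hψ', ← hψ, ← hlam, hβp, h3p] at h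
  unfold angularODE at h
  rw [h]
  ring

/-- For `p = (4n-2)/3`, `β = (n+1)/(4n-5)`, `λ = -β/2`, the function
`ψ(θ) = -(β/2) tan(θ/2)` solves the ODE (1.3) on `(0, π)`. -/
theorem stmt_17 (n : ℕ) (hn : 2 ≤ n) (p : ℝ) (hp : 1 < p)
    (hpn : p = (4 * n - 2) / 3)
    (β lam : ℝ) (hβ : β = (n + 1) / (4 * n - 5)) (hlam : lam = -β / 2)
    (ψ : ℝ → ℝ) (hψ : ∀ θ : ℝ, ψ θ = -(β / 2) * Real.tan (θ / 2)) :
    ∀ θ ∈ Set.Ioo (0 : ℝ) Real.pi,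
      0 = ((p - 1) * ψ θ ^ 2 + lam ^ 2) * deriv ψ θ +
        (lam ^ 2 + ψ θ ^ 2) *
          ((p - 1) * ψ θ ^ 2 + ((n : ℝ) - 2) * (Real.cos θ / Real.sin θ) * ψ θ +
            lam ^ 2 * (p - 1) + lam * ((n : ℝ) - p)) :=
  stmt_17_general n p hpn β lam hβ hlam ψ hψ
end
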